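/- Define C recursively by C_{α₁α₂} := Λ_{α₁α₂} and C_{α₁⋯α_m} := Σ_δ B_{α₁⋯α_{m−1}}^δ C_{δα_m} + (ℏ∇_{α_m})(C_{α₁⋯α_{m−1}}), with B as in the stated recursion. If U_{αβ} = Σ_ρ B_{αβ}^ρ Γ_ρ + D(C_{αβ}) holds for all α,β, where D := δ_{S+Γ} + ℏΔ, U_{α₁⋯α_m} := (ℏ∇_{α_m})⋯(ℏ∇_{α₁})1, and Γ_ρ := ∂_ρΓ = (ℏ∇_ρ)1, then for all m ≥ 2 and all multi-indices, U_{α₁⋯α_m} = Σ_ρ B_{α₁⋯α_m}^ρ Γ_ρ + D(C_{α₁⋯α_m}). -/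

import Mathlib

open Finset

variable {J : Type} [DecidableEq J] [Fintype J]

/-- `ℂ[x₁,…,xₙ]`. -/
abbrev Px (n : ℕ) := MvPolynomial (Fin n) ℂ
/-- `ℂ[x][[t]]`. -/
abbrev Rt (n : ℕ) (J : Type) := MvPowerSeries J (Px n)
/-- `ℂ[x][[t]][[ℏ]]`. -/
abbrev RtH (n : ℕ) (J : Type) := PowerSeries (Rt n J)
/-- `𝒜[[t]]` with `𝒜 = ℂ[x][η]`. -/
abbrev Et (n : ℕ) (J : Type) := Finset (Fin n) → Rt n J
/-- `𝒜[[t]][[ℏ]]`. -/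
abbrev EH (n : ℕ) (J : Type) := Finset (Fin n) → RtH n J

/-- `∂/∂xᵢ` on `ℂ[x][[t]]`. -/
noncomputable def pdx {n : ℕ} (i : Fin n) (F : Rt n J) : Rt n J :=
  fun e => MvPolynomial.pderiv i (F e)

/-- `∂/∂xᵢ` on `ℂ[x][[t]][[ℏ]]`. -/
noncomputable def pdxH {n : ℕ} (i : Fin n) (F : RtH n J) : RtH n J :=
  PowerSeries.mk fun k => pdx i (PowerSeries.coeff k F)

/-- `∂/∂t^α` on `ℂ[x][[t]]`. -/
noncomputable def tderiv {n : ℕ} (α : J) (f : Rt n J) : Rt n J :=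
  fun e => (e α + 1) • f (e + Finsupp.single α 1)

/-- `∂/∂t^α` on `ℂ[x][[t]][[ℏ]]`. -/
noncomputable def tderivH {n : ℕ} (α : J) (F : RtH n J) : RtH n J :=
  PowerSeries.mk fun k => tderiv α (PowerSeries.coeff k F)

/-- `δ_{S+Γ}` on `𝒜[[t]][[ℏ]]`. -/
noncomputable def deltaSGH {n : ℕ} (S : Px n) (Γ : Rt n J) (a : EH n J) : EH n J :=
  fun T => ∑ i : Fin n,
    if i ∈ T then 0
    else ((-1 : ℤ) ^ (T.filter (· < i)).card) •
      (PowerSeries.C (pdx i (MvPowerSeries.C (σ := J) (R := Px n) S + Γ)) * a (insert i T))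

/-- `Δ = Σᵢ (∂/∂xᵢ)(∂/∂ηᵢ)` on `𝒜[[t]][[ℏ]]`. -/
noncomputable def bvDeltaH {n : ℕ} (a : EH n J) : EH n J :=
  fun T => ∑ i : Fin n,
    if i ∈ T then 0
    else ((-1 : ℤ) ^ (T.filter (· < i)).card) • pdxH i (a (insert i T))

/-- `D = δ_{S+Γ} + ℏΔ`. -/
noncomputable def Dop {n : ℕ} (S : Px n) (Γ : Rt n J) (a : EH n J) : EH n J :=
  fun T => deltaSGH S Γ a T + PowerSeries.X * bvDeltaH a T

/-- `ℏ∇_α(w) = ℏ ∂_α w + (∂_αΓ)·w` on `𝒜[[t]][[ℏ]]`. -/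
noncomputable def hnabla {n : ℕ} (Γ : Rt n J) (α : J) (a : EH n J) : EH n J :=
  fun T => PowerSeries.X * tderivH α (a T) + PowerSeries.C (tderiv α Γ) * a T

/-- Embedding `𝒜[[t]] → 𝒜[[t]][[ℏ]]`. -/
noncomputable def etH {n : ℕ} (a : Et n J) : EH n J := fun T => PowerSeries.C (a T)

/-- Embedding `ℂ[[t]] → ℂ[x][[t]][[ℏ]]`. -/
noncomputable def cAH {n : ℕ} (f : MvPowerSeries J ℂ) : RtH n J :=
  PowerSeries.C (MvPowerSeries.map (σ := J) (algebraMap ℂ (Px n)) f)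

/-- The unit `1 ∈ 𝒜[[t]][[ℏ]]`. -/
noncomputable def oneH {n : ℕ} : EH n J := fun T => if T = ∅ then 1 else 0

/-- `U_{α₁⋯α_m} = (ℏ∇_{α_m})⋯(ℏ∇_{α₁})1`, the multi-index given as a list. -/
noncomputable def Ufull {n : ℕ} (Γ : Rt n J) (L : List J) : EH n J :=
  L.foldl (fun w x => hnabla Γ x w) oneH

/-- `B_{α₁α₂}^ρ = A_{α₁α₂}^ρ`,
`B_{α₁⋯α_m}^ρ = Σ_δ B_{α₁⋯α_{m−1}}^δ B_{δα_m}^ρ + ℏ ∂_{α_m} B_{α₁⋯α_{m−1}}^ρ`;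
`BrecH A α₁ α₂ l ρ = B_{α₁α₂α₃⋯α_m}^ρ` with `l = [α_m,…,α₃]`. -/
noncomputable def BrecH {n : ℕ} (A : J → J → J → MvPowerSeries J ℂ) :
    J → J → List J → J → RtH n J
  | a, b, [], ρ => cAH (A a b ρ)
  | a, b, c :: l, ρ =>
      (∑ δ : J, BrecH A a b l δ * cAH (A δ c ρ)) +
        PowerSeries.X * tderivH c (BrecH A a b l ρ)

/-- `C_{α₁α₂} = Λ_{α₁α₂}`,
`C_{α₁⋯α_m} = Σ_δ B_{α₁⋯α_{m−1}}^δ C_{δα_m} + (ℏ∇_{α_m})(C_{α₁⋯α_{m−1}})`;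
`CrecH A Λ Γ α₁ α₂ l = C_{α₁α₂α₃⋯α_m}` with `l = [α_m,…,α₃]`. -/
noncomputable def CrecH {n : ℕ} (A : J → J → J → MvPowerSeries J ℂ)
    (Λ : J → J → Et n J) (Γ : Rt n J) : J → J → List J → EH n J
  | a, b, [] => etH (Λ a b)
  | a, b, c :: l =>
      fun T => (∑ δ : J, BrecH A a b l δ * etH (Λ δ c) T) +
        hnabla Γ c (CrecH A Λ Γ a b l) T

/-!
Induction on the length of the multi-index. Apply `ℏ∇_{α_m}` to the identity for `α₁⋯α_{m−1}`:
against the `x`-independent coefficients `B` it obeys the Leibniz rule, producing the term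
`ℏ∂_{α_m}B`; it commutes with `D`; and `ℏ∇_{α_m}Γ_ρ = U_{ρα_m}` is given by the case `m = 2`.
Since `D` is linear over `x`-independent coefficients, collecting terms yields exactly the
recursions defining `B` and `C`.
-/

namespace MvPowerSeries

variable {σ S R : Type*} [CommSemiring S] [CommSemiring R] [Algebra S R]

noncomputable def mapDerivation (D : Derivation S R R) :
    Derivation S (MvPowerSeries σ R) (MvPowerSeries σ R) where
  toFun f e := D (coeff e f)
  map_add' f g := by
    ext e
    change D (coeff e (f + g)) = D (coeff e f) + D (coeff e g)
    simp
  map_smul' s f := by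
    ext e
    change D (coeff e (s • f)) = s • D (coeff e f)
    simp
  map_one_eq_zero' := by
    classical
    ext e
    change D (coeff e 1) = 0
    simp [coeff_one, apply_ite D]
  leibniz' f g := by
    classical
    ext e
    rw [smul_eq_mul, smul_eq_mul, mul_comm g, map_add, coeff_mul, coeff_mul, ← sum_add_distrib]
    change D (coeff e (f * g)) = _
    rw [coeff_mul, map_sum]
    refine sum_congr rfl fun p _ => ?_
    rw [Derivation.leibniz, smul_eq_mul, smul_eq_mul, mul_comm (coeff p.2 g)]
    rfl

@[simp]
theorem coeff_mapDerivation (D : Derivation S R R) (f : MvPowerSeries σ R) (e : σ →₀ ℕ) :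
    coeff e (mapDerivation D f) = D (coeff e f) := rfl

@[simp]
theorem mapDerivation_C (D : Derivation S R R) (r : R) :
    mapDerivation (σ := σ) D (C r) = C (D r) := by
  classical
  ext e; simp [coeff_C, apply_ite D]

@[simp]
theorem mapDerivation_X (D : Derivation S R R) (i : σ) : mapDerivation D (X i) = 0 := by
  classical
  ext e; simp [coeff_X, apply_ite D]

theorem mapDerivation_commute {S' : Type*} [CommSemiring S'] [Algebra S' R]
    {D : Derivation S R R} {D' : Derivation S' R R} (h : Function.Commute D D') :
    Function.Commute (mapDerivation (σ := σ) D) (mapDerivation D') := fun f => by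
  ext e; simp [h.eq]

end MvPowerSeries

namespace PowerSeries

variable {S R : Type*} [CommSemiring S] [CommSemiring R] [Algebra S R]

@[simp]
theorem mapDerivation_C (D : Derivation S R R) (r : R) :
    MvPowerSeries.mapDerivation D (C r) = C (D r) :=
  MvPowerSeries.mapDerivation_C D r

@[simp]
theorem mapDerivation_X (D : Derivation S R R) : MvPowerSeries.mapDerivation D (X : R⟦X⟧) = 0 :=
  MvPowerSeries.mapDerivation_X D ()

end PowerSeries

section

variable {n : ℕ}

omit [DecidableEq J]

section

omit [Fintype J]

open MvPowerSeries

theorem pdx_eq_mapDerivation (i : Fin n) :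
    pdx (J := J) i = mapDerivation (MvPolynomial.pderiv i) := rfl

theorem tderiv_eq_pderiv (α : J) : tderiv (n := n) α = pderiv (Px n) α := by
  funext f
  refine MvPowerSeries.ext fun e => ?_
  rw [coeff_pderiv, mul_comm, ← Nat.cast_succ, ← nsmul_eq_mul]
  rfl

theorem pdxH_eq_mapDerivation (i : Fin n) :
    pdxH (J := J) i = mapDerivation (mapDerivation (MvPolynomial.pderiv i)) := by
  funext F
  exact PowerSeries.ext fun k => PowerSeries.coeff_mk _ _

theorem tderivH_eq_mapDerivation (α : J) :
    tderivH (n := n) α = mapDerivation (pderiv (Px n) α) := by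
  funext F
  refine PowerSeries.ext fun k => ?_
  rw [tderivH, PowerSeries.coeff_mk, tderiv_eq_pderiv]
  rfl

theorem tderiv_pdx_comm (α : J) (i : Fin n) : Function.Commute (tderiv α) (pdx i) := by
  intro f
  refine MvPowerSeries.ext fun e => ?_
  simp [tderiv_eq_pderiv, pdx_eq_mapDerivation, coeff_pderiv, Derivation.leibniz, mul_comm]

theorem tderivH_pdxH_comm (α : J) (i : Fin n) : Function.Commute (tderivH α) (pdxH i) := by
  have h := tderiv_pdx_comm (n := n) α i
  rw [tderiv_eq_pderiv, pdx_eq_mapDerivation] at h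
  rw [tderivH_eq_mapDerivation, pdxH_eq_mapDerivation]
  exact mapDerivation_commute h

theorem pdxH_cAH (i : Fin n) (f : MvPowerSeries J ℂ) : pdxH i (cAH (n := n) f) = 0 := by
  rw [cAH, pdxH_eq_mapDerivation, PowerSeries.mapDerivation_C,
    map_eq_zero_iff _ PowerSeries.C_injective]
  refine MvPowerSeries.ext fun e => ?_
  simp [coeff_map]

noncomputable def nablaH (Γ : Rt n J) (α : J) : RtH n J →+ RtH n J where
  toFun F := PowerSeries.X * tderivH α F + PowerSeries.C (tderiv α Γ) * F
  map_zero' := by simp [tderivH_eq_mapDerivation]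
  map_add' F G := by simp only [tderivH_eq_mapDerivation, map_add]; ring

theorem hnabla_apply (Γ : Rt n J) (α : J) (w : EH n J) (T : Finset (Fin n)) :
    hnabla Γ α w T = nablaH Γ α (w T) := rfl

theorem nablaH_mul (Γ : Rt n J) (α : J) (F G : RtH n J) :
    nablaH Γ α (F * G) = PowerSeries.X * tderivH α F * G + F * nablaH Γ α G := by
  change PowerSeries.X * tderivH α (F * G) + _ = _ + F * (PowerSeries.X * tderivH α G + _)
  rw [tderivH_eq_mapDerivation, Derivation.leibniz, smul_eq_mul, smul_eq_mul]
  ring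

/-- `D = Σᵢ (∂ᵢ(S+Γ) + ℏ ∂/∂xᵢ) ∂/∂ηᵢ`; this is the coefficient of `∂/∂ηᵢ` (see `Dop_apply`). -/
noncomputable def DopCoeff (S : Px n) (Γ : Rt n J) (i : Fin n) : RtH n J →+ RtH n J where
  toFun F := PowerSeries.C (pdx i (C S + Γ)) * F + PowerSeries.X * pdxH i F
  map_zero' := by simp [pdxH_eq_mapDerivation]
  map_add' F G := by simp only [pdxH_eq_mapDerivation, map_add]; ring

theorem Dop_apply (S : Px n) (Γ : Rt n J) (w : EH n J) (T : Finset (Fin n)) :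
    Dop S Γ w T = ∑ i, if i ∈ T then 0
      else ((-1 : ℤ) ^ (T.filter (· < i)).card) • DopCoeff S Γ i (w (insert i T)) := by
  rw [Dop, deltaSGH, bvDeltaH, mul_sum, ← sum_add_distrib]
  refine sum_congr rfl fun i _ => ?_
  split_ifs
  · simp
  · rw [mul_smul_comm, ← smul_add]
    rfl

theorem DopCoeff_mul_of_pdxH_eq_zero (S : Px n) (Γ : Rt n J) (i : Fin n) {F : RtH n J}
    (hF : pdxH i F = 0) (G : RtH n J) : DopCoeff S Γ i (F * G) = F * DopCoeff S Γ i G := by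
  simp only [DopCoeff, AddMonoidHom.coe_mk, ZeroHom.coe_mk]
  rw [pdxH_eq_mapDerivation, Derivation.leibniz, ← pdxH_eq_mapDerivation, hF]
  simp only [smul_eq_mul]
  ring

/-- The commutators of `ℏ∇_α` with multiplication by `∂ᵢ(S+Γ)` and with `ℏ ∂/∂xᵢ` are
`ℏ ∂_α∂ᵢΓ` and `-ℏ ∂ᵢ∂_αΓ`, which cancel. -/
theorem DopCoeff_nablaH_comm (S : Px n) (Γ : Rt n J) (i : Fin n) (α : J) :
    Function.Commute (DopCoeff S Γ i) (nablaH Γ α) := by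
  intro F
  have hα : tderivH α (PowerSeries.C (pdx i (C S + Γ))) = PowerSeries.C (pdx i (tderiv α Γ)) := by
    rw [tderivH_eq_mapDerivation, PowerSeries.mapDerivation_C, ← tderiv_eq_pderiv,
      tderiv_pdx_comm, tderiv_eq_pderiv, map_add, pderiv_C, zero_add]
  have hi : pdxH i (PowerSeries.C (tderiv α Γ)) = PowerSeries.C (pdx i (tderiv α Γ)) := by
    rw [pdxH_eq_mapDerivation, PowerSeries.mapDerivation_C, pdx_eq_mapDerivation]
  have hc := tderivH_pdxH_comm α i F
  change PowerSeries.C _ * (PowerSeries.X * tderivH α F + _) + PowerSeries.X * pdxH i (_ + _) =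
    PowerSeries.X * tderivH α (_ + PowerSeries.X * pdxH i F) +
      PowerSeries.C _ * (PowerSeries.C _ * F + PowerSeries.X * pdxH i F)
  simp only [tderivH_eq_mapDerivation, pdxH_eq_mapDerivation] at hα hi hc ⊢
  simp only [map_add, Derivation.leibniz, PowerSeries.mapDerivation_X, smul_eq_mul, hα, hi, hc]
  ring

theorem hnabla_add (Γ : Rt n J) (α : J) (u v : EH n J) :
    hnabla Γ α (u + v) = hnabla Γ α u + hnabla Γ α v :=
  funext fun T => map_add (nablaH Γ α) (u T) (v T)

theorem hnabla_sum {ι : Type*} (Γ : Rt n J) (α : J) (s : Finset ι) (w : ι → EH n J) :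
    hnabla Γ α (∑ x ∈ s, w x) = ∑ x ∈ s, hnabla Γ α (w x) :=
  map_sum ((nablaH Γ α).compLeft (Finset (Fin n))) w s

theorem hnabla_smul (Γ : Rt n J) (α : J) (F : RtH n J) (w : EH n J) :
    hnabla Γ α (F • w) = (PowerSeries.X * tderivH α F) • w + F • hnabla Γ α w :=
  funext fun T => nablaH_mul Γ α F (w T)

theorem Dop_add (S : Px n) (Γ : Rt n J) (u v : EH n J) :
    Dop S Γ (u + v) = Dop S Γ u + Dop S Γ v := by
  funext T
  simp only [Pi.add_apply, Dop_apply, ← sum_add_distrib]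
  refine sum_congr rfl fun i _ => ?_
  split_ifs <;> simp [smul_add]

theorem Dop_smul_of_pdxH_eq_zero (S : Px n) (Γ : Rt n J) {F : RtH n J}
    (hF : ∀ i, pdxH i F = 0) (w : EH n J) : Dop S Γ (F • w) = F • Dop S Γ w := by
  funext T
  simp only [Pi.smul_apply, Dop_apply, smul_eq_mul, mul_sum]
  refine sum_congr rfl fun i _ => ?_
  split_ifs
  · rw [mul_zero]
  · rw [DopCoeff_mul_of_pdxH_eq_zero S Γ i (hF i), mul_smul_comm]

theorem Dop_hnabla_comm (S : Px n) (Γ : Rt n J) (α : J) :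
    Function.Commute (Dop S Γ) (hnabla Γ α) := by
  intro w
  funext T
  rw [hnabla_apply, Dop_apply, Dop_apply, map_sum]
  refine sum_congr rfl fun i _ => ?_
  split_ifs
  · rw [map_zero]
  · rw [map_zsmul, hnabla_apply, DopCoeff_nablaH_comm]

theorem Dop_sum_smul {ι : Type*} (S : Px n) (Γ : Rt n J) (s : Finset ι) {B : ι → RtH n J}
    (hB : ∀ x i, pdxH i (B x) = 0) (w : ι → EH n J) :
    Dop S Γ (∑ x ∈ s, B x • w x) = ∑ x ∈ s, B x • Dop S Γ (w x) :=
  (map_sum (AddMonoidHom.mk' (Dop S Γ) (Dop_add S Γ)) _ s).trans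
    (sum_congr rfl fun x _ => Dop_smul_of_pdxH_eq_zero S Γ (hB x) (w x))

theorem Ufull_append_singleton (Γ : Rt n J) (L : List J) (α : J) :
    Ufull Γ (L ++ [α]) = hnabla Γ α (Ufull Γ L) := by
  rw [Ufull, List.foldl_append]
  rfl

theorem fun_sum_mul_add_eq {ι : Type*} (s : Finset ι) (B : ι → RtH n J) (w : ι → EH n J)
    (v : EH n J) : (fun T => (∑ x ∈ s, B x * w x T) + v T) = ∑ x ∈ s, B x • w x + v := by
  funext T
  simp [Finset.sum_apply]

end

theorem pdxH_BrecH (A : J → J → J → MvPowerSeries J ℂ) (i : Fin n) (a b : J) (l : List J)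
    (ρ : J) : pdxH i (BrecH (n := n) A a b l ρ) = 0 := by
  induction l generalizing ρ with
  | nil => exact pdxH_cAH i _
  | cons c l ih =>
    have hc := pdxH_cAH (J := J) (n := n) i
    have hcomm := tderivH_pdxH_comm (n := n) c i (BrecH A a b l ρ)
    rw [BrecH]
    simp only [pdxH_eq_mapDerivation, tderivH_eq_mapDerivation] at ih hc hcomm ⊢
    simp [ih, hc, ← hcomm]

theorem CrecH_cons (A : J → J → J → MvPowerSeries J ℂ) (Λ : J → J → Et n J) (Γ : Rt n J)
    (a b c : J) (l : List J) :
    CrecH A Λ Γ a b (c :: l) =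
      ∑ δ, BrecH (n := n) A a b l δ • etH (Λ δ c) + hnabla Γ c (CrecH A Λ Γ a b l) := by
  rw [CrecH, ← fun_sum_mul_add_eq]

theorem Ufull_append_singleton_eq_sum_smul_add_Dop (S : Px n) (Γ : Rt n J)
    (A : J → J → J → MvPowerSeries J ℂ) (Λ : J → J → Et n J)
    (hbase : ∀ ρ α, hnabla Γ α (hnabla Γ ρ oneH) =
      ∑ δ, cAH (n := n) (A ρ α δ) • hnabla Γ δ oneH + Dop S Γ (etH (Λ ρ α)))
    {L : List J} {B : J → RtH n J} {C : EH n J} (hB : ∀ ρ i, pdxH i (B ρ) = 0)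
    (hL : Ufull Γ L = ∑ ρ, B ρ • hnabla Γ ρ oneH + Dop S Γ C) (α : J) :
    Ufull Γ (L ++ [α]) =
      ∑ δ, (∑ ρ, B ρ * cAH (A ρ α δ) + PowerSeries.X * tderivH α (B δ)) • hnabla Γ δ oneH +
        Dop S Γ (∑ ρ, B ρ • etH (Λ ρ α) + hnabla Γ α C) := by
  rw [Ufull_append_singleton, hL, hnabla_add, hnabla_sum, ← Dop_hnabla_comm, Dop_add,
    Dop_sum_smul _ _ _ hB]
  simp only [hnabla_smul, hbase, smul_add, smul_sum, smul_smul, add_smul, sum_smul,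
    sum_add_distrib]
  rw [sum_comm (γ := J)]
  abel

end

theorem U_eq_B_Gamma_plus_DC_general (n : ℕ) (S : Px n) (Γ : Rt n J)
    (A : J → J → J → MvPowerSeries J ℂ) (Λ : J → J → Et n J)
    (hbase : ∀ a b : J,
      Ufull Γ [a, b] =
        fun T => (∑ ρ : J, cAH (A a b ρ) * hnabla Γ ρ oneH T) +
          Dop S Γ (etH (Λ a b)) T) :
    ∀ (a b : J) (l : List J),
      Ufull Γ (a :: b :: l.reverse) =
        fun T => (∑ ρ : J, BrecH A a b l ρ * hnabla Γ ρ oneH T) +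
          Dop S Γ (CrecH A Λ Γ a b l) T := by
  have hbase_smul (ρ α : J) : hnabla Γ α (hnabla Γ ρ oneH) =
      ∑ δ, cAH (n := n) (A ρ α δ) • hnabla Γ δ oneH + Dop S Γ (etH (Λ ρ α)) := by
    rw [← fun_sum_mul_add_eq, ← hbase]
    rfl
  intro a b l
  induction l with
  | nil => exact hbase a b
  | cons c l ih =>
    rw [fun_sum_mul_add_eq] at ih ⊢
    rw [List.reverse_cons, ← List.cons_append, ← List.cons_append,
      Ufull_append_singleton_eq_sum_smul_add_Dop S Γ A Λ hbase_smul
        (fun ρ i => pdxH_BrecH A i a b l ρ) ih, CrecH_cons]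
    rfl

/-- If `U_{αβ} = Σ_ρ B_{αβ}^ρ Γ_ρ + D(C_{αβ})` holds for all `α,β` (with
`Γ_ρ = ∂_ρΓ = (ℏ∇_ρ)1` and `D = δ_{S+Γ} + ℏΔ`), then for all `m ≥ 2` and all
multi-indices `α₁⋯α_m`, `U_{α₁⋯α_m} = Σ_ρ B_{α₁⋯α_m}^ρ Γ_ρ + D(C_{α₁⋯α_m})`. -/
theorem U_eq_B_Gamma_plus_DC (n : ℕ) (S : Px n) (Γ : Rt n J)
    (A : J → J → J → MvPowerSeries J ℂ) (Λ : J → J → Et n J)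
    (hΛ : ∀ α β (T : Finset (Fin n)), T.card ≠ 1 → Λ α β T = 0)
    (hbase : ∀ a b : J,
      Ufull Γ [a, b] =
        fun T => (∑ ρ : J, cAH (A a b ρ) * hnabla Γ ρ oneH T) +
          Dop S Γ (etH (Λ a b)) T) :
    ∀ (a b : J) (l : List J),
      Ufull Γ (a :: b :: l.reverse) =
        fun T => (∑ ρ : J, BrecH A a b l ρ * hnabla Γ ρ oneH T) +
          Dop S Γ (CrecH A Λ Γ a b l) T :=
  U_eq_B_Gamma_plus_DC_general n S Γ A Λ hbase
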